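/- arXiv:1402.2888 — 3 statements merged into one kernel-verified Lean document; each statement's English description precedes it below -/
import Mathlib

section
/- Let u = Σ_α u_α x^α, v = Σ_α v_α x^α, f = Σ_α f_α x^α be formal power series in n variables with u = v·f. Suppose |u_α| ≤ a r^{|α|} and |v_α| ≤ a r^{|α|} for all multi-indices α and some a, r > 0, that v_α = 0 whenever |α| < k, and that |v_{(k,0,…,0)}| = c > 0. Then there exist A > 0 and R = (R₁,…,Rₙ), depending only on a, c, r, k, n, such that |f_β| ≤ A R₁^{β₁}⋯Rₙ^{βₙ} for every multi-index β. In particular f has a positive radius of convergence and defines a real analytic function near the origin. -/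
/-!
Compare the coefficients of `x^(β + k e₀)` in `u = v * f`, where `x₀` is the distinguished
variable: `v_{k e₀} f_β` is `u_{β + k e₀}` minus the products `v_α f_δ` with `α + δ = β + k e₀`,
`α ≠ k e₀` and `|α| ≥ k`. Giving `x₀` the weight `k + 1` and every other variable the weight
`2k + 1` makes the weight of each such `δ` at most `w(β) - |α|`. Hence, by strong induction on the
weight, the bound `|f_δ| ≤ A r^|δ| / τ^w(δ)` propagates to `f_β`: each product carries an extra
factor `τ^|α|`, and `∑_{α ≠ 0} τ^|α| ≤ (1 - τ)⁻ⁿ - 1` is small for small `τ`.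
-/

open MvPowerSeries Finset Filter Topology

variable {ι : Type*}

theorem exists_inv_one_sub_pow_sub_one_le (n : ℕ) {ε : ℝ} (hε : 0 < ε) :
    ∃ τ : ℝ, 0 < τ ∧ τ < 1 ∧ ((1 - τ) ^ n)⁻¹ - 1 ≤ ε := by
  have hcont : Tendsto (fun τ : ℝ => ((1 - τ) ^ n)⁻¹ - 1) (𝓝[>] 0) (𝓝 0) := by
    have : ContinuousAt (fun τ : ℝ => ((1 - τ) ^ n)⁻¹ - 1) 0 :=
      ((continuous_const.sub continuous_id).pow n).continuousAt.inv₀ (by simp) |>.sub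
        continuousAt_const
    simpa using this.tendsto.mono_left nhdsWithin_le_nhds
  obtain ⟨τ, hτε, hτ⟩ :=
    ((hcont.eventually (ge_mem_nhds hε)).and (Ioo_mem_nhdsGT one_pos)).exists
  exact ⟨τ, hτ.1, hτ.2, hτε⟩

theorem sum_Iic_pow_degree_le [Fintype ι] [DecidableEq ι] {τ : ℝ} (h0 : 0 ≤ τ)
    (h1 : τ < 1) (γ : ι →₀ ℕ) :
    ∑ α ∈ Iic γ, τ ^ α.degree ≤ ((1 - τ) ^ Fintype.card ι)⁻¹ := by
  calc ∑ α ∈ Iic γ, τ ^ α.degree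
      = ∑ g ∈ (Iic γ).image (⇑), ∏ i, τ ^ g i := by
        rw [sum_image fun _ _ _ _ h => DFunLike.coe_injective h]
        simp only [Finsupp.degree_eq_sum, prod_pow_eq_pow_sum]
    _ ≤ ∑ g ∈ Fintype.piFinset fun i => range (γ i + 1), ∏ i, τ ^ g i := by
        refine sum_le_sum_of_subset_of_nonneg ?_ fun _ _ _ => by positivity
        simp only [subset_iff, mem_image, mem_Iic, Fintype.mem_piFinset, mem_range,
          Nat.lt_succ_iff, forall_exists_index, and_imp]
        rintro _ α hα rfl i
        exact hα i
    _ = ∏ i, ∑ j ∈ range (γ i + 1), τ ^ j := (prod_univ_sum _ _).symm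
    _ ≤ ∏ _i : ι, (1 - τ)⁻¹ := by
        gcongr with i
        simpa using geom_sum_Ico_le_of_lt_one (m := 0) (n := γ i + 1) h0 h1
    _ = ((1 - τ) ^ Fintype.card ι)⁻¹ := by simp

theorem sum_pow_degree_fst_le [Fintype ι] [DecidableEq ι] {τ : ℝ} (h0 : 0 ≤ τ)
    (h1 : τ < 1) {γ : ι →₀ ℕ} {T : Finset ((ι →₀ ℕ) × (ι →₀ ℕ))} (hT : T ⊆ antidiagonal γ)
    (hT0 : ∀ p ∈ T, p.1 ≠ 0) :
    ∑ p ∈ T, τ ^ p.1.degree ≤ ((1 - τ) ^ Fintype.card ι)⁻¹ - 1 := by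
  calc ∑ p ∈ T, τ ^ p.1.degree = ∑ α ∈ T.image Prod.fst, τ ^ α.degree := by
        rw [sum_image]
        intro p hp q hq h
        have hpq : p.1 + p.2 = q.1 + q.2 :=
          (HasAntidiagonal.mem_antidiagonal.1 (hT hp)).trans
            (HasAntidiagonal.mem_antidiagonal.1 (hT hq)).symm
        exact Prod.ext h (add_left_cancel (h ▸ hpq))
    _ ≤ ∑ α ∈ (Iic γ).erase 0, τ ^ α.degree := by
        refine sum_le_sum_of_subset_of_nonneg ?_ fun _ _ _ => by positivity
        simp only [subset_iff, mem_image, mem_erase, mem_Iic, forall_exists_index, and_imp]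
        rintro _ p hp rfl
        exact ⟨hT0 p hp, HasAntidiagonal.antidiagonal.fst_le (hT hp)⟩
    _ = ∑ α ∈ Iic γ, τ ^ α.degree - 1 := by
        rw [← add_sum_erase _ _ (mem_Iic.2 (zero_le : 0 ≤ γ))]
        simp
    _ ≤ ((1 - τ) ^ Fintype.card ι)⁻¹ - 1 := by
        gcongr
        exact sum_Iic_pow_degree_le h0 h1 γ

theorem Finsupp.eq_single_of_apply_eq_degree [Fintype ι] {i₀ : ι} {d : ι →₀ ℕ}
    (h : d i₀ = d.degree) : d = Finsupp.single i₀ d.degree := by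
  ext i
  rcases eq_or_ne i i₀ with rfl | hi
  · simpa using h
  · have := add_le_sum (f := d) (s := univ) (fun _ _ => Nat.zero_le _) (mem_univ i) (mem_univ i₀) hi
    rw [← Finsupp.degree_eq_sum] at this
    simp [Ne.symm hi]
    omega

theorem Finsupp.ne_zero_of_le_degree_of_ne_single {i₀ : ι} {k : ℕ} {α : ι →₀ ℕ}
    (hk : k ≤ α.degree) (hα : α ≠ Finsupp.single i₀ k) : α ≠ 0 := by
  rintro rfl
  simp_all

def divisionWeight [DecidableEq ι] (i₀ : ι) (k : ℕ) (i : ι) : ℕ :=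
  if i = i₀ then k + 1 else 2 * k + 1

theorem weight_divisionWeight_add_mul [Fintype ι] [DecidableEq ι] (i₀ : ι) (k : ℕ)
    (d : ι →₀ ℕ) :
    Finsupp.weight (divisionWeight i₀ k) d + k * d i₀ = (2 * k + 1) * d.degree := by
  have hk : k * d i₀ = ∑ i, if i = i₀ then k * d i else 0 := by simp
  rw [Finsupp.weight_eq_sum, Finsupp.degree_eq_sum, mul_sum, hk, ← sum_add_distrib]
  refine sum_congr rfl fun i _ => ?_
  unfold divisionWeight
  split_ifs <;> simp only [smul_eq_mul, add_zero] <;> ring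

theorem weight_single_add_degree_le [Fintype ι] [DecidableEq ι] {i₀ : ι} {k : ℕ}
    {α : ι →₀ ℕ} (hk : k ≤ α.degree) (hα : α ≠ Finsupp.single i₀ k) :
    Finsupp.weight (divisionWeight i₀ k) (Finsupp.single i₀ k) + α.degree ≤
      Finsupp.weight (divisionWeight i₀ k) α := by
  have hα' := weight_divisionWeight_add_mul i₀ k α
  have he := weight_divisionWeight_add_mul i₀ k (Finsupp.single i₀ k)
  simp only [Finsupp.single_eq_same, Finsupp.degree_single] at he
  rcases (Finsupp.le_degree i₀ α).lt_or_eq with hlt | heq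
  · nlinarith
  · have : k + 1 ≤ α.degree := by
      refine lt_of_le_of_ne hk fun h => hα ?_
      rw [Finsupp.eq_single_of_apply_eq_degree heq, h]
    nlinarith

theorem weight_add_degree_le_of_add_eq [Fintype ι] [DecidableEq ι] {i₀ : ι} {k : ℕ}
    {α δ β : ι →₀ ℕ} (h : α + δ = Finsupp.single i₀ k + β) (hk : k ≤ α.degree)
    (hα : α ≠ Finsupp.single i₀ k) :
    Finsupp.weight (divisionWeight i₀ k) δ + α.degree ≤ Finsupp.weight (divisionWeight i₀ k) β := by
  have hw := congr_arg (Finsupp.weight (divisionWeight i₀ k)) h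
  simp only [map_add] at hw
  have := weight_single_add_degree_le hk hα
  omega

theorem pow_mul_pow_div_pow_le {r τ : ℝ} (hr : 0 ≤ r) (hτ₀ : 0 < τ) (hτ₁ : τ ≤ 1)
    {k d d₁ d₂ w w₂ : ℕ} (hd : d₁ + d₂ = k + d) (hw : w₂ + d₁ ≤ w) :
    r ^ d₁ * (r ^ d₂ / τ ^ w₂) ≤ r ^ k * (r ^ d / τ ^ w) * τ ^ d₁ := by
  have hτw : τ ^ w ≤ τ ^ d₁ * τ ^ w₂ := by
    rw [← pow_add]
    exact pow_le_pow_of_le_one hτ₀.le hτ₁ (by omega)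
  rw [mul_div_assoc', ← pow_add, hd, pow_add, div_le_iff₀ (by positivity)]
  calc r ^ k * r ^ d = r ^ k * (r ^ d / τ ^ w) * τ ^ w := by field_simp
    _ ≤ r ^ k * (r ^ d / τ ^ w) * (τ ^ d₁ * τ ^ w₂) := by gcongr
    _ = r ^ k * (r ^ d / τ ^ w) * τ ^ d₁ * τ ^ w₂ := by ring

theorem MvPowerSeries.abs_coeff_mul_abs_coeff_le {R : Type*} [DecidableEq ι] [CommRing R]
    [LinearOrder R] [IsStrictOrderedRing R] (v f : MvPowerSeries ι R) (e β : ι →₀ ℕ) :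
    |coeff e v| * |coeff β f| ≤ |coeff (e + β) (v * f)| +
      ∑ p ∈ ((antidiagonal (e + β)).erase (e, β)).filter (fun p => coeff p.1 v ≠ 0),
        |coeff p.1 v| * |coeff p.2 f| := by
  have hmem : (e, β) ∈ antidiagonal (e + β) := HasAntidiagonal.mem_antidiagonal.2 rfl
  have hsplit : coeff e v * coeff β f = coeff (e + β) (v * f) -
      ∑ p ∈ (antidiagonal (e + β)).erase (e, β), coeff p.1 v * coeff p.2 f := by
    rw [coeff_mul, ← add_sum_erase _ _ hmem, add_sub_cancel_right]
  rw [← abs_mul, hsplit, sum_filter_of_ne fun p _ h => abs_ne_zero.1 (left_ne_zero_of_mul h)]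
  refine (abs_sub _ _).trans (add_le_add_right ?_ _)
  simpa only [abs_mul] using
    abs_sum_le_sum_abs (fun p : (ι →₀ ℕ) × (ι →₀ ℕ) => coeff p.1 v * coeff p.2 f) _

theorem sum_abs_coeff_mul_abs_coeff_le [Fintype ι] [DecidableEq ι] (i₀ : ι) (k : ℕ)
    {a r τ A : ℝ} (ha : 0 ≤ a) (hr : 0 ≤ r) (hτ₀ : 0 < τ) (hτ₁ : τ < 1) (hA : 0 ≤ A)
    {v f : MvPowerSeries ι ℝ} (hv : ∀ d : ι →₀ ℕ, |coeff d v| ≤ a * r ^ d.degree)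
    (hvk : ∀ d : ι →₀ ℕ, d.degree < k → coeff d v = 0) (β : ι →₀ ℕ)
    (ih : ∀ δ : ι →₀ ℕ, Finsupp.weight (divisionWeight i₀ k) δ <
        Finsupp.weight (divisionWeight i₀ k) β →
      |coeff δ f| ≤ A * (r ^ δ.degree / τ ^ Finsupp.weight (divisionWeight i₀ k) δ)) :
    ∑ p ∈ ((antidiagonal (Finsupp.single i₀ k + β)).erase (Finsupp.single i₀ k, β)).filter
        (fun p => coeff p.1 v ≠ 0), |coeff p.1 v| * |coeff p.2 f| ≤
      A * (a * r ^ k * (r ^ β.degree / τ ^ Finsupp.weight (divisionWeight i₀ k) β)) *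
        (((1 - τ) ^ Fintype.card ι)⁻¹ - 1) := by
  set w : (ι →₀ ℕ) →+ ℕ := Finsupp.weight (divisionWeight i₀ k)
  set e := Finsupp.single i₀ k
  set T := ((antidiagonal (e + β)).erase (e, β)).filter (fun p => coeff p.1 v ≠ 0)
  have hT : ∀ p ∈ T, p.1 + p.2 = e + β ∧ k ≤ p.1.degree ∧ p.1 ≠ e := by
    intro p hp
    simp only [T, mem_filter, mem_erase, HasAntidiagonal.mem_antidiagonal] at hp
    obtain ⟨⟨hpne, hpsum⟩, hvp⟩ := hp
    refine ⟨hpsum, not_lt.1 (mt (hvk p.1) hvp), fun h => hpne (Prod.ext h ?_)⟩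
    exact add_left_cancel (a := e) (by rw [← hpsum, h])
  have hT0 : ∀ p ∈ T, p.1 ≠ 0 := fun p hp =>
    Finsupp.ne_zero_of_le_degree_of_ne_single (hT p hp).2.1 (hT p hp).2.2
  have hterm : ∀ p ∈ T, |coeff p.1 v| * |coeff p.2 f| ≤
      A * (a * r ^ k * (r ^ β.degree / τ ^ w β)) * τ ^ p.1.degree := by
    intro p hp
    obtain ⟨hpsum, hk, hpe⟩ := hT p hp
    have hw : w p.2 + p.1.degree ≤ w β := weight_add_degree_le_of_add_eq hpsum hk hpe
    have hpos : 0 < p.1.degree :=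
      Nat.pos_of_ne_zero (mt (Finsupp.degree_eq_zero_iff _).1 (hT0 p hp))
    have hdeg : p.1.degree + p.2.degree = k + β.degree := by
      simpa [e] using congr_arg Finsupp.degree hpsum
    calc |coeff p.1 v| * |coeff p.2 f|
        ≤ a * r ^ p.1.degree * (A * (r ^ p.2.degree / τ ^ w p.2)) :=
          mul_le_mul (hv _) (ih _ (by omega)) (abs_nonneg _) (by positivity)
      _ = a * A * (r ^ p.1.degree * (r ^ p.2.degree / τ ^ w p.2)) := by ring
      _ ≤ a * A * (r ^ k * (r ^ β.degree / τ ^ w β) * τ ^ p.1.degree) :=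
          mul_le_mul_of_nonneg_left (pow_mul_pow_div_pow_le hr hτ₀ hτ₁.le hdeg hw) (by positivity)
      _ = A * (a * r ^ k * (r ^ β.degree / τ ^ w β)) * τ ^ p.1.degree := by ring
  calc ∑ p ∈ T, |coeff p.1 v| * |coeff p.2 f|
      ≤ ∑ p ∈ T, A * (a * r ^ k * (r ^ β.degree / τ ^ w β)) * τ ^ p.1.degree := sum_le_sum hterm
    _ ≤ A * (a * r ^ k * (r ^ β.degree / τ ^ w β)) * (((1 - τ) ^ Fintype.card ι)⁻¹ - 1) := by
        rw [← mul_sum]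
        gcongr
        exact sum_pow_degree_fst_le hτ₀.le hτ₁ ((filter_subset _ _).trans (erase_subset _ _)) hT0

theorem abs_coeff_le_of_eq_mul [Fintype ι] [DecidableEq ι] (i₀ : ι) (k : ℕ)
    {a r c τ : ℝ} (ha : 0 ≤ a) (hr : 0 ≤ r) (hc : 0 < c) (hτ₀ : 0 < τ) (hτ₁ : τ < 1)
    (hτ : 2 * a * r ^ k * (((1 - τ) ^ Fintype.card ι)⁻¹ - 1) ≤ c)
    {u v f : MvPowerSeries ι ℝ} (huvf : u = v * f)
    (hu : ∀ d : ι →₀ ℕ, |coeff d u| ≤ a * r ^ d.degree)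
    (hv : ∀ d : ι →₀ ℕ, |coeff d v| ≤ a * r ^ d.degree)
    (hvk : ∀ d : ι →₀ ℕ, d.degree < k → coeff d v = 0)
    (hvc : c ≤ |coeff (Finsupp.single i₀ k) v|) (β : ι →₀ ℕ) :
    |coeff β f| ≤
      2 * a * r ^ k / c * (r ^ β.degree / τ ^ Finsupp.weight (divisionWeight i₀ k) β) := by
  set w : (ι →₀ ℕ) →+ ℕ := Finsupp.weight (divisionWeight i₀ k)
  set e := Finsupp.single i₀ k
  set A := 2 * a * r ^ k / c
  set G := ((1 - τ) ^ Fintype.card ι)⁻¹ - 1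
  induction hN : w β using Nat.strong_induction_on generalizing β with
  | _ N ih =>
  subst hN
  set M := a * r ^ k * (r ^ β.degree / τ ^ w β)
  have hM : 0 ≤ M := by positivity
  have hu' : |coeff (e + β) u| ≤ M := by
    calc |coeff (e + β) u| ≤ a * r ^ k * r ^ β.degree := by
          simpa [e, pow_add, mul_assoc] using hu (e + β)
      _ ≤ M := mul_le_mul_of_nonneg_left
          (le_div_self (by positivity) (by positivity) (pow_le_one₀ hτ₀.le hτ₁.le)) (by positivity)
  have hAG : A * G ≤ 1 := by rwa [div_mul_eq_mul_div, div_le_one hc]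
  have hsplit := abs_coeff_mul_abs_coeff_le v f e β
  rw [← huvf] at hsplit
  have herr := sum_abs_coeff_mul_abs_coeff_le i₀ k ha hr hτ₀ hτ₁ (by positivity) hv hvk β
    fun δ hδ => ih _ hδ δ rfl
  have key : c * |coeff β f| ≤ c * (A * (r ^ β.degree / τ ^ w β)) := by
    calc c * |coeff β f| ≤ |coeff e v| * |coeff β f| := by gcongr
      _ ≤ M + A * M * G := by linarith
      _ ≤ M + M := by linarith [mul_le_mul_of_nonneg_left hAG hM]
      _ = c * (A * (r ^ β.degree / τ ^ w β)) := by
          simp only [M, A]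
          field_simp
          ring
  exact le_of_mul_le_mul_left key hc

theorem prod_div_pow_pow_eq [Fintype ι] (r τ : ℝ) (m : ι → ℕ) (β : ι →₀ ℕ) :
    ∏ i, (r / τ ^ m i) ^ β i = r ^ β.degree / τ ^ Finsupp.weight m β := by
  simp only [div_pow, prod_div_distrib, ← pow_mul, prod_pow_eq_pow_sum, Finsupp.degree_eq_sum,
    Finsupp.weight_eq_sum, smul_eq_mul, mul_comm]

/-- Coefficient estimate for the quotient of two formal power series: if `u = v·f`,
the coefficients of `u` and `v` satisfy `|u_α|, |v_α| ≤ a r^{|α|}`, `v` has no terms of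
degree `< k`, and `|v_{(k,0,…,0)}| = c > 0`, then `|f_β| ≤ A·R₁^{β₁}⋯Rₙ^{βₙ}` for
constants `A, R` depending only on `a, c, r, k, n`. -/
theorem stmt7 {n : ℕ} (hn : 0 < n) (a r c : ℝ) (k : ℕ)
    (ha : 0 < a) (hr : 0 < r) (hc : 0 < c) :
    ∃ A : ℝ, 0 < A ∧ ∃ R : Fin n → ℝ, (∀ i, 0 < R i) ∧
      ∀ u v f : MvPowerSeries (Fin n) ℝ, u = v * f →
        (∀ d : Fin n →₀ ℕ, |coeff d u| ≤ a * r ^ (∑ i, d i)) →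
        (∀ d : Fin n →₀ ℕ, |coeff d v| ≤ a * r ^ (∑ i, d i)) →
        (∀ d : Fin n →₀ ℕ, (∑ i, d i) < k → coeff d v = 0) →
        |coeff (Finsupp.single (⟨0, hn⟩ : Fin n) k) v| = c →
        ∀ β : Fin n →₀ ℕ, |coeff β f| ≤ A * ∏ i, R i ^ β i := by
  obtain ⟨τ, hτ₀, hτ₁, hτ⟩ :=
    exists_inv_one_sub_pow_sub_one_le n (ε := c / (2 * a * r ^ k)) (by positivity)
  refine ⟨2 * a * r ^ k / c, by positivity, fun i => r / τ ^ divisionWeight ⟨0, hn⟩ k i,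
    fun i => by positivity, ?_⟩
  intro u v f huvf hu hv hvk hvc β
  rw [prod_div_pow_pow_eq]
  have hτ' : 2 * a * r ^ k * (((1 - τ) ^ Fintype.card (Fin n))⁻¹ - 1) ≤ c := by
    rw [Fintype.card_fin, mul_comm]
    exact (le_div_iff₀ (by positivity)).1 hτ
  simp only [← Finsupp.degree_eq_sum] at hu hv hvk
  exact abs_coeff_le_of_eq_mul _ k ha.le hr.le hc hτ₀ hτ₁ hτ' huvf hu hv hvk hvc.ge β
end

section
/- For any a₀ > 0, r > 0, k ∈ ℕ, n ∈ ℕ, there exist A > 0 and R = (R₁,…,Rₙ) ∈ (0,∞)^n such that for every multi-index β: a₀ r^{|β|+k} + a₀ A Σ_γ R^γ r^{|β|+k−|γ|} ≤ A R^β, where the sum runs over multi-indices γ with γ ≤ β + (k,0,…,0) componentwise, |γ| ≤ |β|, and γ ≠ β. -/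
open Finset

private lemma geom_two (q : ℝ) (h0 : 0 ≤ q) (h2 : q ≤ 1/2) (m : ℕ) :
    ∑ j ∈ Finset.range m, q ^ j ≤ 2 - 2 * q ^ m := by
  induction m with
  | zero => simp
  | succ m ih =>
      rw [Finset.sum_range_succ, pow_succ]
      nlinarith [pow_nonneg h0 m]

private lemma geom_two' (q : ℝ) (h0 : 0 ≤ q) (h2 : q ≤ 1/2) (m : ℕ) :
    ∑ j ∈ Finset.range m, q ^ j ≤ 2 :=
  (geom_two q h0 h2 m).trans (by nlinarith [pow_nonneg h0 m])

private lemma geom_shift (q : ℝ) (h0 : 0 ≤ q) (h2 : q ≤ 1/2) (k m : ℕ) :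
    ∑ j ∈ Finset.range m, q ^ (j - k) ≤ (k : ℝ) + 2 := by
  have hsub : ∑ j ∈ Finset.range m, q ^ (j - k)
      ≤ ∑ j ∈ Finset.range (k + 1 + m), q ^ (j - k) := by
    apply Finset.sum_le_sum_of_subset_of_nonneg
    · exact Finset.range_subset_range.2 (by omega)
    · intro i _ _; positivity
  refine hsub.trans ?_
  rw [Finset.sum_range_add]
  have h1 : ∑ j ∈ Finset.range (k + 1), q ^ (j - k) = (k : ℝ) + 1 := by
    have hones : ∀ j ∈ Finset.range (k + 1), q ^ (j - k) = 1 := by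
      intro j hj
      rw [Finset.mem_range] at hj
      rw [Nat.sub_eq_zero_of_le (by omega), pow_zero]
    rw [Finset.sum_congr rfl hones, Finset.sum_const, Finset.card_range, nsmul_eq_mul]
    push_cast; ring
  have h2' : ∑ j ∈ Finset.range m, q ^ (k + 1 + j - k) ≤ 1 := by
    have : ∀ j ∈ Finset.range m, q ^ (k + 1 + j - k) = q * q ^ j := by
      intro j _
      rw [show k + 1 + j - k = j + 1 by omega, pow_succ]; ring
    rw [Finset.sum_congr rfl this, ← Finset.mul_sum]
    have := geom_two' q h0 h2 m
    nlinarith [Finset.sum_nonneg (fun j (_ : j ∈ Finset.range m) => pow_nonneg h0 j)]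
  linarith

/-- The key combinatorial estimate: for any `a₀, r > 0`, `k`, `n ≥ 1`, there are
`A > 0` and `R = (R₁,…,Rₙ)` with all `Rᵢ > 0` such that for every multi-index `β`,
`a₀ r^{|β|+k} + a₀ A ∑_γ R^γ r^{|β|+k-|γ|} ≤ A R^β`, the sum being over multi-indices
`γ ≤ β + (k,0,…,0)` componentwise with `|γ| ≤ |β|` and `γ ≠ β`. -/
theorem stmt8 {n : ℕ} (hn : 0 < n) (a₀ r : ℝ) (ha : 0 < a₀) (hr : 0 < r) (k : ℕ) :
    ∃ A : ℝ, 0 < A ∧ ∃ R : Fin n → ℝ, (∀ i, 0 < R i) ∧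
      ∀ β : Fin n →₀ ℕ,
        a₀ * r ^ ((∑ i, β i) + k) +
          a₀ * A *
            ∑ γ ∈ (Finset.Iic (β + Finsupp.single (⟨0, hn⟩ : Fin n) k)).filter
                (fun γ => (∑ i, γ i) ≤ (∑ i, β i) ∧ γ ≠ β),
              (∏ i, R i ^ γ i) * r ^ ((∑ i, β i) + k - ∑ i, γ i)
          ≤ A * ∏ i, R i ^ β i := by
  classical
  set i₀ : Fin n := ⟨0, hn⟩
  set c : ℝ := max r 1 with hc
  set N : ℝ := max (2 * c) (2 * a₀ * r ^ k * (((k : ℝ) + 2) * 2 ^ (n - 1))) with hNdef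
  have hc1 : 1 ≤ c := le_max_right _ _
  have hrc : r ≤ c := le_max_left _ _
  have hN2c : 2 * c ≤ N := le_max_left _ _
  have hN2 : 2 ≤ N := by linarith
  have hN1 : 1 ≤ N := by linarith
  have hN0 : 0 < N := by linarith
  have hrN : r ≤ N := by linarith
  set q : ℝ := c / N with hq
  have hq0 : 0 ≤ q := by positivity
  have hq2 : q ≤ 1 / 2 := by
    rw [hq, div_le_iff₀ hN0]; linarith
  have hq1 : q ≤ 1 := by linarith
  set R : Fin n → ℝ := fun i => if i = i₀ then N ^ 2 else N ^ 4 with hR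
  have hRpos : ∀ i, 0 < R i := by
    intro i; rw [hR]; dsimp only; split <;> positivity
  have hNpow : ∀ s t : ℕ, s ≤ t → N ^ s ≤ N ^ t := fun s t h => pow_le_pow_right₀ hN1 h
  have hrR : ∀ i, r ≤ R i := by
    intro i; rw [hR]; dsimp only
    have hN1' : N ≤ N ^ 2 := by nlinarith
    have h2 : r ≤ N ^ 2 := by linarith
    have h4 : r ≤ N ^ 4 := h2.trans (hNpow 2 4 (by norm_num))
    split <;> assumption
  set A : ℝ := 2 * a₀ * r ^ k with hA
  have hApos : 0 < A := by positivity
  refine ⟨A, hApos, R, hRpos, fun β => ?_⟩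
  set μ : Fin n →₀ ℕ := β + Finsupp.single i₀ k with hμ
  set B : ℝ := ∏ i, R i ^ β i with hB
  have hBpos : 0 < B := Finset.prod_pos fun i _ => pow_pos (hRpos i) _
  -- the per-coordinate weight
  set g : Fin n → ℕ → ℝ := fun i j => if i = i₀ then q ^ (j - k) else (1 / N) ^ j with hg
  have hgnonneg : ∀ i j, 0 ≤ g i j := by
    intro i j; rw [hg]; dsimp only; split <;> positivity
  -- basic sums
  have hμsingle : ∑ i, Finsupp.single i₀ k i = k := by
    simp [Finsupp.single_apply]
  have hμsum : ∑ i, μ i = (∑ i, β i) + k := by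
    rw [hμ]; simp only [Finsupp.add_apply, Finset.sum_add_distrib, hμsingle]
  have hProdμ : ∏ i, R i ^ μ i = B * N ^ (2 * k) := by
    rw [hμ]
    simp only [Finsupp.add_apply]
    rw [Finset.prod_congr rfl (fun i _ => pow_add (R i) (β i) _), Finset.prod_mul_distrib, ← hB]
    congr 1
    rw [Finset.prod_eq_single i₀]
    · simp [hR, Finsupp.single_apply, ← pow_mul]
    · intro b _ hb; simp [Finsupp.single_apply, Ne.symm hb]
    · simp
  -- pointwise bound
  have hpoint : ∀ γ ∈ (Finset.Iic μ).filter
      (fun γ => (∑ i, γ i) ≤ (∑ i, β i) ∧ γ ≠ β),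
      (∏ i, R i ^ γ i) * r ^ ((∑ i, β i) + k - ∑ i, γ i)
        ≤ (B * r ^ k / N) * ∏ i, g i ((μ - γ) i) := by
    intro γ hγ
    rw [Finset.mem_filter, Finset.mem_Iic] at hγ
    obtain ⟨hγμ, hγs, hγβ⟩ := hγ
    set δ : Fin n →₀ ℕ := μ - γ with hδ
    have hγiμi : ∀ i, γ i ≤ μ i := fun i => hγμ i
    have hδi : ∀ i, γ i + δ i = μ i := by
      intro i
      rw [hδ, Finsupp.tsub_apply]
      exact Nat.add_sub_cancel' (hγiμi i)
    set d₀ : ℕ := δ i₀ with hd₀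
    set u : ℕ := ∑ i ∈ Finset.univ.erase i₀, δ i with hu
    have hδsum : ∑ i, δ i = d₀ + u := by
      rw [hd₀, hu, Finset.add_sum_erase _ _ (Finset.mem_univ i₀)]
    have hsums : (∑ i, γ i) + (d₀ + u) = (∑ i, β i) + k := by
      rw [← hδsum, ← hμsum, ← Finset.sum_add_distrib]
      exact Finset.sum_congr rfl fun i _ => hδi i
    have hkd : k ≤ d₀ + u := by omega
    have hδne : δ ≠ Finsupp.single i₀ k := by
      intro hcontra
      apply hγβ
      have hγeq : γ = μ - δ := by
        rw [hδ, tsub_tsub_cancel_of_le hγμ]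
      rw [hγeq, hcontra, hμ, add_tsub_cancel_right]
    have hk1 : k + 1 ≤ d₀ + 2 * u := by
      rcases Nat.eq_zero_or_pos u with hu0 | hu0
      · have hzero : ∀ i ∈ Finset.univ.erase i₀, δ i = 0 := by
          refine (Finset.sum_eq_zero_iff).1 ?_
          rw [← hu]; exact hu0
        have hd0k : d₀ ≠ k := by
          intro hdk
          apply hδne
          ext i
          rcases eq_or_ne i i₀ with h | h
          · rw [h, Finsupp.single_apply, if_pos rfl, ← hdk, hd₀]
          · rw [Finsupp.single_apply, if_neg (Ne.symm h),
              hzero i (Finset.mem_erase.2 ⟨h, Finset.mem_univ i⟩)]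
        omega
      · omega
    set m : ℕ := d₀ + u - k with hm
    have hmk : m + k = d₀ + u := by omega
    -- the product over δ
    have hPδ : ∏ i, R i ^ δ i = N ^ (2 * d₀ + 4 * u) := by
      rw [← Finset.mul_prod_erase _ _ (Finset.mem_univ i₀)]
      have h1 : R i₀ ^ δ i₀ = N ^ (2 * d₀) := by
        simp [hR, ← pow_mul, mul_comm, hd₀]
      have h2 : ∏ i ∈ Finset.univ.erase i₀, R i ^ δ i = N ^ (4 * u) := by
        have hval : ∀ i ∈ Finset.univ.erase i₀, R i ^ δ i = (N ^ 4) ^ δ i := by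
          intro i hi
          rw [hR]; dsimp only
          rw [if_neg (Finset.mem_erase.1 hi).1]
        rw [Finset.prod_congr rfl hval, Finset.prod_pow_eq_pow_sum, ← hu, ← pow_mul]
      rw [h1, h2, ← pow_add]
    have hG : ∏ i, g i (δ i) = q ^ (d₀ - k) * (1 / N) ^ u := by
      rw [← Finset.mul_prod_erase _ _ (Finset.mem_univ i₀)]
      have h1 : g i₀ (δ i₀) = q ^ (d₀ - k) := by
        rw [hg]; dsimp only; rw [if_pos rfl, hd₀]
      have h2 : ∏ i ∈ Finset.univ.erase i₀, g i (δ i) = (1 / N) ^ u := by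
        have hval : ∀ i ∈ Finset.univ.erase i₀, g i (δ i) = (1 / N) ^ δ i := by
          intro i hi
          rw [hg]; dsimp only
          rw [if_neg (Finset.mem_erase.1 hi).1]
        rw [Finset.prod_congr rfl hval, Finset.prod_pow_eq_pow_sum, ← hu]
      rw [h1, h2]
    have hPγ : ∏ i, R i ^ γ i = B * N ^ (2 * k) / N ^ (2 * d₀ + 4 * u) := by
      rw [eq_div_iff (by positivity), ← hPδ, ← Finset.prod_mul_distrib, ← hProdμ]
      exact Finset.prod_congr rfl fun i _ => by rw [← pow_add, hδi i]
    -- core inequality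
    have hcore : N ^ (2 * k + 1 + u) * r ^ m ≤ q ^ (d₀ - k) * N ^ (2 * d₀ + 4 * u) := by
      have hr1 : r ^ m ≤ q ^ (d₀ - k) * N ^ m := by
        have h1 : r ^ m ≤ c ^ m := pow_le_pow_left₀ hr.le hrc m
        have h2 : c ^ m = q ^ m * N ^ m := by
          rw [hq, div_pow, div_mul_eq_mul_div, mul_div_assoc, div_self (by positivity), mul_one]
        have h3 : q ^ m ≤ q ^ (d₀ - k) :=
          pow_le_pow_of_le_one hq0 hq1 (by omega)
        calc r ^ m ≤ c ^ m := h1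
          _ = q ^ m * N ^ m := h2
          _ ≤ q ^ (d₀ - k) * N ^ m :=
            mul_le_mul_of_nonneg_right h3 (by positivity)
      calc N ^ (2 * k + 1 + u) * r ^ m
          ≤ N ^ (2 * k + 1 + u) * (q ^ (d₀ - k) * N ^ m) :=
            mul_le_mul_of_nonneg_left hr1 (by positivity)
        _ = q ^ (d₀ - k) * N ^ (2 * k + 1 + u + m) := by rw [pow_add]; ring
        _ ≤ q ^ (d₀ - k) * N ^ (2 * d₀ + 4 * u) := by
            apply mul_le_mul_of_nonneg_left _ (by positivity)
            exact pow_le_pow_right₀ hN1 (by omega)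
    -- assemble
    have hexp : (∑ i, β i) + k - (∑ i, γ i) = d₀ + u := by omega
    rw [hexp, hG, hPγ]
    rw [div_mul_eq_mul_div, div_le_iff₀ (by positivity)]
    have hrhs : B * r ^ k / N * (q ^ (d₀ - k) * (1 / N) ^ u) * N ^ (2 * d₀ + 4 * u)
        = (B * r ^ k) * (q ^ (d₀ - k) * N ^ (2 * d₀ + 4 * u)) / (N ^ (u + 1)) := by
      rw [one_div, inv_pow, pow_succ]
      field_simp
    rw [hrhs, le_div_iff₀ (by positivity)]
    calc B * N ^ (2 * k) * r ^ (d₀ + u) * N ^ (u + 1)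
        = (B * r ^ k) * (N ^ (2 * k + 1 + u) * r ^ m) := by
          rw [show d₀ + u = k + m by omega, pow_add r k m,
            pow_add N (2 * k + 1) u, pow_add N (2 * k) 1]
          ring
      _ ≤ (B * r ^ k) * (q ^ (d₀ - k) * N ^ (2 * d₀ + 4 * u)) :=
          mul_le_mul_of_nonneg_left hcore (by positivity)
    -- sum machinery
  have hsumG : ∑ γ ∈ (Finset.Iic μ).filter
        (fun γ => (∑ i, γ i) ≤ (∑ i, β i) ∧ γ ≠ β),
        ∏ i, g i ((μ - γ) i) ≤ ((k : ℝ) + 2) * 2 ^ (n - 1) := by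
    have hs2 : ∑ γ ∈ (Finset.Iic μ).filter
          (fun γ => (∑ i, γ i) ≤ (∑ i, β i) ∧ γ ≠ β),
          ∏ i, g i ((μ - γ) i) ≤ ∑ γ ∈ Finset.Iic μ, ∏ i, g i ((μ - γ) i) := by
      apply Finset.sum_le_sum_of_subset_of_nonneg (Finset.filter_subset _ _)
      intro γ _ _
      exact Finset.prod_nonneg fun i _ => hgnonneg i _
    have hs3 : ∑ γ ∈ Finset.Iic μ, ∏ i, g i ((μ - γ) i)
        = ∑ δ ∈ Finset.Iic μ, ∏ i, g i (δ i) := by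
      refine Finset.sum_nbij' (fun γ => μ - γ) (fun δ => μ - δ) ?_ ?_ ?_ ?_ ?_
      · intro γ _; exact Finset.mem_Iic.2 tsub_le_self
      · intro δ _; exact Finset.mem_Iic.2 tsub_le_self
      · intro γ hγ; exact tsub_tsub_cancel_of_le (Finset.mem_Iic.1 hγ)
      · intro δ hδ; exact tsub_tsub_cancel_of_le (Finset.mem_Iic.1 hδ)
      · intro γ _; rfl
    have hs4 : ∑ δ ∈ Finset.Iic μ, ∏ i, g i (δ i)
        = ∏ i, ∑ j ∈ Finset.Iic (μ i), g i j := by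
      rw [Finset.prod_sum]
      refine Finset.sum_nbij' (fun δ (a : Fin n) (_ : a ∈ Finset.univ) => δ a)
        (fun p => Finsupp.equivFunOnFinite.symm (fun i => p i (Finset.mem_univ i)))
        ?_ ?_ ?_ ?_ ?_
      · intro δ hδ
        refine Finset.mem_pi.2 fun a _ => Finset.mem_Iic.2 ?_
        exact Finsupp.le_def.1 (Finset.mem_Iic.1 hδ) a
      · intro p hp
        refine Finset.mem_Iic.2 (Finsupp.le_def.2 fun a => ?_)
        simpa using Finset.mem_Iic.1 (Finset.mem_pi.1 hp a (Finset.mem_univ a))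
      · intro δ _
        exact Finsupp.equivFunOnFinite.symm_apply_apply δ
      · intro p _
        funext a ha
        simp
      · intro δ _
        exact (Finset.prod_attach Finset.univ (fun i => g i (δ i))).symm
    have hS0 : ∑ j ∈ Finset.Iic (μ i₀), g i₀ j ≤ (k : ℝ) + 2 := by
      have hIr : Finset.Iic (μ i₀) = Finset.range (μ i₀ + 1) := by
        ext x; simp [Nat.lt_succ_iff]
      have hgval : ∀ j ∈ Finset.range (μ i₀ + 1), g i₀ j = q ^ (j - k) := by
        intro j _; rw [hg]; dsimp only; rw [if_pos rfl]
      rw [hIr, Finset.sum_congr rfl hgval]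
      exact geom_shift q hq0 hq2 k _
    have hSi : ∀ i ∈ Finset.univ.erase i₀, ∑ j ∈ Finset.Iic (μ i), g i j ≤ 2 := by
      intro i hi
      have hIr : Finset.Iic (μ i) = Finset.range (μ i + 1) := by
        ext x; simp [Nat.lt_succ_iff]
      have hgval : ∀ j ∈ Finset.range (μ i + 1), g i j = (1 / N) ^ j := by
        intro j _; rw [hg]; dsimp only
        rw [if_neg (Finset.mem_erase.1 hi).1]
      rw [hIr, Finset.sum_congr rfl hgval]
      refine geom_two' (1 / N) (by positivity) ?_ _
      rw [div_le_div_iff₀ hN0 (by norm_num : (0:ℝ) < 2)]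
      linarith
    have hprodS : ∏ i, ∑ j ∈ Finset.Iic (μ i), g i j ≤ ((k : ℝ) + 2) * 2 ^ (n - 1) := by
      rw [← Finset.mul_prod_erase _ _ (Finset.mem_univ i₀)]
      have hpe : ∏ i ∈ Finset.univ.erase i₀, ∑ j ∈ Finset.Iic (μ i), g i j
          ≤ 2 ^ (n - 1) := by
        calc ∏ i ∈ Finset.univ.erase i₀, ∑ j ∈ Finset.Iic (μ i), g i j
            ≤ ∏ _i ∈ Finset.univ.erase i₀, (2 : ℝ) :=
              Finset.prod_le_prod
                (fun i _ => Finset.sum_nonneg fun j _ => hgnonneg i j)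
                (fun i hi => hSi i hi)
          _ = 2 ^ (n - 1) := by
              rw [Finset.prod_const, Finset.card_erase_of_mem (Finset.mem_univ _),
                Finset.card_univ, Fintype.card_fin]
      refine mul_le_mul hS0 hpe ?_ (by positivity)
      exact Finset.prod_nonneg fun i _ => Finset.sum_nonneg fun j _ => hgnonneg i j
    calc _ ≤ ∑ γ ∈ Finset.Iic μ, ∏ i, g i ((μ - γ) i) := hs2
      _ = ∏ i, ∑ j ∈ Finset.Iic (μ i), g i j := by rw [hs3, hs4]
      _ ≤ ((k : ℝ) + 2) * 2 ^ (n - 1) := hprodS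
  have hsumfinal : ∑ γ ∈ (Finset.Iic μ).filter
        (fun γ => (∑ i, γ i) ≤ (∑ i, β i) ∧ γ ≠ β),
        (∏ i, R i ^ γ i) * r ^ ((∑ i, β i) + k - ∑ i, γ i)
      ≤ (B * r ^ k / N) * (((k : ℝ) + 2) * 2 ^ (n - 1)) := by
    calc ∑ γ ∈ (Finset.Iic μ).filter
          (fun γ => (∑ i, γ i) ≤ (∑ i, β i) ∧ γ ≠ β),
          (∏ i, R i ^ γ i) * r ^ ((∑ i, β i) + k - ∑ i, γ i)
        ≤ ∑ γ ∈ (Finset.Iic μ).filter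
            (fun γ => (∑ i, γ i) ≤ (∑ i, β i) ∧ γ ≠ β),
            (B * r ^ k / N) * ∏ i, g i ((μ - γ) i) := Finset.sum_le_sum hpoint
      _ = (B * r ^ k / N) * ∑ γ ∈ (Finset.Iic μ).filter
            (fun γ => (∑ i, γ i) ≤ (∑ i, β i) ∧ γ ≠ β),
            ∏ i, g i ((μ - γ) i) := by rw [Finset.mul_sum]
      _ ≤ (B * r ^ k / N) * (((k : ℝ) + 2) * 2 ^ (n - 1)) :=
          mul_le_mul_of_nonneg_left hsumG (by positivity)
  have hfirst : a₀ * r ^ ((∑ i, β i) + k) ≤ a₀ * r ^ k * B := by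
    have hrB : r ^ (∑ i, β i) ≤ B := by
      rw [hB, ← Finset.prod_pow_eq_pow_sum]
      exact Finset.prod_le_prod (fun i _ => by positivity)
        (fun i _ => pow_le_pow_left₀ hr.le (hrR i) _)
    calc a₀ * r ^ ((∑ i, β i) + k) = a₀ * r ^ k * r ^ (∑ i, β i) := by
          rw [pow_add]; ring
      _ ≤ a₀ * r ^ k * B := mul_le_mul_of_nonneg_left hrB (by positivity)
  have hsecond : a₀ * A * ∑ γ ∈ (Finset.Iic μ).filter
        (fun γ => (∑ i, γ i) ≤ (∑ i, β i) ∧ γ ≠ β),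
        (∏ i, R i ^ γ i) * r ^ ((∑ i, β i) + k - ∑ i, γ i)
      ≤ A * B / 2 := by
    have h1 : a₀ * A * ∑ γ ∈ (Finset.Iic μ).filter
          (fun γ => (∑ i, γ i) ≤ (∑ i, β i) ∧ γ ≠ β),
          (∏ i, R i ^ γ i) * r ^ ((∑ i, β i) + k - ∑ i, γ i)
        ≤ a₀ * A * ((B * r ^ k / N) * (((k : ℝ) + 2) * 2 ^ (n - 1))) :=
      mul_le_mul_of_nonneg_left hsumfinal (by positivity)
    have hNge : 2 * a₀ * r ^ k * (((k : ℝ) + 2) * 2 ^ (n - 1)) ≤ N := le_max_right _ _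
    have h2 : a₀ * A * ((B * r ^ k / N) * (((k : ℝ) + 2) * 2 ^ (n - 1)))
        = A * B * (a₀ * r ^ k * (((k : ℝ) + 2) * 2 ^ (n - 1)) / N) := by
      field_simp
    have h3 : a₀ * r ^ k * (((k : ℝ) + 2) * 2 ^ (n - 1)) / N ≤ 1 / 2 := by
      rw [div_le_div_iff₀ hN0 (by norm_num : (0:ℝ) < 2)]
      linarith
    have h4 : A * B * (a₀ * r ^ k * (((k : ℝ) + 2) * 2 ^ (n - 1)) / N)
        ≤ A * B * (1 / 2) := mul_le_mul_of_nonneg_left h3 (by positivity)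
    calc _ ≤ a₀ * A * ((B * r ^ k / N) * (((k : ℝ) + 2) * 2 ^ (n - 1))) := h1
      _ = A * B * (a₀ * r ^ k * (((k : ℝ) + 2) * 2 ^ (n - 1)) / N) := h2
      _ ≤ A * B * (1 / 2) := h4
      _ = A * B / 2 := by ring
  have hAB : A * B = 2 * (a₀ * r ^ k * B) := by rw [hA]; ring
  linarith
end

section
/- Suppose P and Q are polynomials in ℝ[x₁,…,xₙ] such that H^{n−1}(Z(Q) ∖ Z(P)) = 0 and every non-constant divisor of Q changes sign on ℝ^n. Then Q divides P. -/
/-!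
A square never changes sign, so `Q` is squarefree and it suffices that every irreducible
factor `q` of `Q` divides `P`. After a linear change of coordinates, `q` changes sign along a
line in the first coordinate direction, hence along every parallel line through a small ball
`B ⊆ ℝⁿ⁻¹`, and each of these lines meets `Z(q)`. If `q ∤ P`, the resultant `r` of `q` and `P`
in the first variable is a nonzero polynomial on `ℝⁿ⁻¹` vanishing wherever the line above a point
meets `Z(q) ∩ Z(P)`. So the open set `B ∖ Z(r)` lies in the projection of `Z(q) ∖ Z(P)`, which is
Lebesgue-null since the projection is 1-Lipschitz. Thus `r` vanishes on `B`, so `r = 0`.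
-/

open MvPolynomial MeasureTheory

namespace Polynomial

variable {R : Type*} [CommRing R]

theorem map_resultant_eq_zero_of_eval₂_eq_zero {S : Type*} [CommRing S] (φ : R →+* S)
    {A B : R[X]} (hA : A.natDegree ≠ 0) {t : S} (hAt : A.eval₂ φ t = 0)
    (hBt : B.eval₂ φ t = 0) : φ (A.resultant B) = 0 := by
  obtain ⟨U, V, -, -, h⟩ := exists_mul_add_mul_eq_C_resultant A B le_rfl le_rfl (.inl hA)
  simpa [hAt, hBt] using congrArg (eval₂ φ t) h.symm

theorem resultant_ne_zero_of_irreducible_of_not_dvd [IsDomain R] [IsGCDMonoid R] {A B : R[X]}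
    (hA : Irreducible A) (hdeg : A.natDegree ≠ 0) (hAB : ¬A ∣ B) : A.resultant B ≠ 0 := by
  have hι := IsFractionRing.injective R (FractionRing R)
  have hprim := hA.isPrimitive hdeg
  have hcop : IsCoprime (A.map (algebraMap R (FractionRing R)))
      (B.map (algebraMap R (FractionRing R))) :=
    (hprim.irreducible_iff_irreducible_map_fraction_map.1 hA).coprime_iff_not_dvd.2
      (mt hprim.dvd_of_fraction_map_dvd_fraction_map hAB)
  have := resultant_ne_zero _ _ hcop
  rw [natDegree_map_eq_of_injective hι, natDegree_map_eq_of_injective hι,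
    resultant_map_map] at this
  exact fun h => this (by rw [h, map_zero])

end Polynomial

theorem Squarefree.dvd_of_forall_prime_dvd {α : Type*} [CommMonoidWithZero α]
    [UniqueFactorizationMonoid α] [DecompositionMonoid α] {Q P : α} (hQ : Squarefree Q)
    (h : ∀ p, Prime p → p ∣ Q → p ∣ P) : Q ∣ P := by
  induction Q using UniqueFactorizationMonoid.induction_on_prime with
  | h₁ => exact (hQ 0 (by simp)).dvd
  | h₂ u hu => exact hu.dvd
  | h₃ a p _ hp ih =>
    exact (IsRelPrime.of_squarefree_mul hQ).mul_dvd (h p hp (dvd_mul_right p a))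
      (ih (hQ.squarefree_of_dvd (dvd_mul_left a p)) fun r hr hra => h r hr (hra.mul_left p))

theorem LinearEquiv.exists_apply_eq_of_ne_zero {K V : Type*} [Field K] [AddCommGroup V]
    [Module K V] {x y : V} (hx : x ≠ 0) (hy : y ≠ 0) : ∃ g : V ≃ₗ[K] V, g x = y := by
  obtain ⟨g, hg⟩ := Submodule.exists_linearEquiv_restrict_eq
    ((LinearEquiv.toSpanNonzeroSingleton K V x hx).symm.trans
      (LinearEquiv.toSpanNonzeroSingleton K V y hy))
  have := hg (LinearEquiv.toSpanNonzeroSingleton K V x hx 1)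
  rw [LinearEquiv.trans_apply, LinearEquiv.symm_apply_apply] at this
  simp only [LinearEquiv.toSpanNonzeroSingleton_apply, one_smul] at this
  exact ⟨g, this.symm⟩

namespace MvPolynomial

theorem totalDegree_ne_zero_of_not_isUnit {σ K : Type*} [Field K] {p : MvPolynomial σ K}
    (h0 : p ≠ 0) (hu : ¬IsUnit p) : p.totalDegree ≠ 0 := by
  intro hdeg
  refine hu (isUnit_iff_totalDegree_of_isReduced.2 ⟨Ne.isUnit fun hc => h0 ?_, hdeg⟩)
  rw [totalDegree_eq_zero_iff_eq_C.1 hdeg, hc, C_0]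

theorem dvd_of_isEmpty {σ K : Type*} [IsEmpty σ] [Field K]
    {P Q : MvPolynomial σ K} (h : ∀ x, eval x Q = 0 → eval x P = 0) : Q ∣ P := by
  rw [eq_C_of_isEmpty Q, eq_C_of_isEmpty P] at h ⊢
  simp only [eval_C] at h
  by_cases hQ : Q.coeff 0 = 0
  · simp [h isEmptyElim hQ]
  · exact ((Ne.isUnit hQ).map C).dvd

theorem not_isUnit_X {σ R : Type*} [CommRing R] [IsReduced R] [Nontrivial R] (i : σ) :
    ¬IsUnit (X i : MvPolynomial σ R) :=
  fun h => by simpa using (isUnit_iff_totalDegree_of_isReduced.1 h).2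

theorem squarefree_of_forall_dvd_exists_eval_neg {σ K : Type*} [Nonempty σ] [Field K]
    [LinearOrder K] [IsStrictOrderedRing K] {Q : MvPolynomial σ K}
    (h : ∀ Q₁ Q₂, Q = Q₁ * Q₂ → Q₁.totalDegree ≠ 0 → ∃ y, eval y Q₁ < 0) : Squarefree Q := by
  have hsq : ∀ d, d ≠ 0 → d * d ∣ Q → IsUnit d := by
    rintro d hd ⟨e, he⟩
    by_contra hu
    obtain ⟨y, hy⟩ := h _ e he
      (totalDegree_ne_zero_of_not_isUnit (mul_ne_zero hd hd) (by rwa [isUnit_mul_self_iff]))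
    rw [map_mul] at hy
    exact (mul_self_nonneg _).not_gt hy
  have hQ : Q ≠ 0 := by
    rintro rfl
    exact not_isUnit_X _ (hsq (X (Classical.arbitrary σ)) (X_ne_zero _) (dvd_zero _))
  intro d hd
  exact hsq d (by rintro rfl; exact hQ (zero_dvd_iff.1 (by simpa using hd))) hd

theorem eq_zero_of_forall_mem_ball_eval_eq_zero {σ : Type*} [Fintype σ]
    {p : MvPolynomial σ ℝ} {y : σ → ℝ} {ε : ℝ} (hε : 0 < ε)
    (h : ∀ x ∈ Metric.ball y ε, eval x p = 0) : p = 0 :=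
  funext_set (fun i => Metric.ball (y i) ε)
    (fun i => by simpa [Real.ball_eq_Ioo] using Set.Ioo_infinite (by linarith))
    fun x hx => by rw [h x (by rwa [ball_pi _ hε]), map_zero]

section compLinear

variable {σ R : Type*} [Fintype σ] [DecidableEq σ] [CommRing R]

noncomputable def compLinearMap (L : (σ → R) →ₗ[R] σ → R) :
    MvPolynomial σ R →ₐ[R] MvPolynomial σ R :=
  aeval fun i => ∑ j, C (LinearMap.toMatrix' L i j) * X j

@[simp]
theorem eval_compLinearMap (L : (σ → R) →ₗ[R] σ → R) (x : σ → R) (p : MvPolynomial σ R) :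
    eval x (compLinearMap L p) = eval (L x) p := by
  rw [← LinearMap.toMatrix'_mulVec, compLinearMap, aeval_eq_bind₁, eval, eval₂Hom_bind₁]
  congr 2
  ext i
  simp [Matrix.mulVec, dotProduct]

variable [IsDomain R] [Infinite R]

noncomputable def compLinearEquiv (L : (σ → R) ≃ₗ[R] σ → R) :
    MvPolynomial σ R ≃ₐ[R] MvPolynomial σ R :=
  AlgEquiv.ofAlgHom (compLinearMap L.toLinearMap) (compLinearMap L.symm.toLinearMap)
    (AlgHom.ext fun _ => MvPolynomial.funext fun _ => by
      rw [AlgHom.comp_apply, eval_compLinearMap, eval_compLinearMap]; simp)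
    (AlgHom.ext fun _ => MvPolynomial.funext fun _ => by
      rw [AlgHom.comp_apply, eval_compLinearMap, eval_compLinearMap]; simp)

@[simp]
theorem eval_compLinearEquiv (L : (σ → R) ≃ₗ[R] σ → R) (x : σ → R) (p : MvPolynomial σ R) :
    eval x (compLinearEquiv L p) = eval (L x) p :=
  eval_compLinearMap L.toLinearMap x p

end compLinear

end MvPolynomial

theorem Set.eq_empty_of_hausdorffMeasure_eq_zero_of_nonpos {X : Type*} [EMetricSpace X]
    [MeasurableSpace X] [BorelSpace X] {d : ℝ} (hd : d ≤ 0) {s : Set X} (hs : μH[d] s = 0) :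
    s = ∅ := by
  by_contra hne
  have := (Measure.one_le_hausdorffMeasure_zero_of_nonempty
    (Set.nonempty_iff_ne_empty.2 hne)).trans (Measure.hausdorffMeasure_mono hd s)
  simp [hs] at this

theorem lipschitzWith_one_finTail {E : Type*} [PseudoMetricSpace E] {m : ℕ} :
    LipschitzWith 1 (Fin.tail : (Fin (m + 1) → E) → Fin m → E) :=
  LipschitzWith.of_dist_le_mul fun x y => by
    rw [NNReal.coe_one, one_mul]
    exact (dist_pi_le_iff dist_nonneg).2 fun i => dist_le_pi_dist x y i.succ

theorem volume_image_finTail_eq_zero {m : ℕ} {N : Set (Fin (m + 1) → ℝ)}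
    (hN : μH[(m : ℝ)] N = 0) : volume (Fin.tail '' N) = 0 := by
  have hvol : (μH[(m : ℝ)] : Measure (Fin m → ℝ)) = volume := by
    simpa using hausdorffMeasure_pi_real (ι := Fin m)
  rw [← hvol]
  exact nonpos_iff_eq_zero.1 ((lipschitzWith_one_finTail.hausdorffMeasure_image_le
    (Nat.cast_nonneg m) N).trans (by simp [hN]))

theorem LinearEquiv.hausdorffMeasure_preimage_eq_zero {E : Type*} [NormedAddCommGroup E]
    [NormedSpace ℝ E] [FiniteDimensional ℝ E] [MeasurableSpace E] [BorelSpace E]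
    (L : E ≃ₗ[ℝ] E) {d : ℝ} (hd : 0 ≤ d) {s : Set E} (hs : μH[d] s = 0) :
    μH[d] (L ⁻¹' s) = 0 := by
  rw [← L.image_symm_eq_preimage]
  exact nonpos_iff_eq_zero.1
    ((L.symm.toContinuousLinearEquiv.lipschitz.hausdorffMeasure_image_le hd s).trans (by simp [hs]))

theorem MvPolynomial.eval_cons_eq_eval₂_finSuccEquiv {R : Type*} [CommRing R] {m : ℕ}
    (f : MvPolynomial (Fin (m + 1)) R) (y : Fin m → R) (t : R) :
    eval (Fin.cons t y) f = (finSuccEquiv R m f).eval₂ (eval y) t := by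
  rw [eval_eq_eval_mv_eval', Polynomial.eval_map]

theorem dvd_of_sign_change_on_line {m : ℕ} {q P : MvPolynomial (Fin (m + 1)) ℝ}
    (hq : Irreducible q) (hnull : μH[(m : ℝ)] ({x | eval x q = 0} \ {x | eval x P = 0}) = 0)
    {a b : Fin (m + 1) → ℝ} (hab : Fin.tail a = Fin.tail b) (ha : 0 < eval a q)
    (hb : eval b q < 0) : q ∣ P := by
  rw [← Fin.cons_self_tail a] at ha
  rw [← Fin.cons_self_tail b, ← hab] at hb
  have hdeg : (finSuccEquiv ℝ m q).natDegree ≠ 0 := fun h => by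
    rw [eval_cons_eq_eval₂_finSuccEquiv, Polynomial.eq_C_of_natDegree_eq_zero h,
      Polynomial.eval₂_C] at ha hb
    exact ha.not_gt hb
  by_contra hqP
  set r := (finSuccEquiv ℝ m q).resultant (finSuccEquiv ℝ m P)
  have hr : r ≠ 0 := Polynomial.resultant_ne_zero_of_irreducible_of_not_dvd
    ((MulEquiv.irreducible_iff _).2 hq) hdeg (mt (map_dvd_iff (finSuccEquiv ℝ m)).1 hqP)
  have hcont : ∀ c : ℝ, Continuous fun y : Fin m → ℝ => eval (Fin.cons c y) q := fun c =>
    (continuous_eval q).comp (continuous_const.finCons continuous_id)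
  obtain ⟨ε, hε, hball⟩ : ∃ ε > 0, Metric.ball (Fin.tail a) ε ⊆
      {y | 0 < eval (Fin.cons (a 0) y) q ∧ eval (Fin.cons (b 0) y) q < 0} :=
    Metric.isOpen_iff.1 ((isOpen_lt continuous_const (hcont _)).inter
      (isOpen_lt (hcont _) continuous_const)) _ ⟨ha, hb⟩
  have hsub : Metric.ball (Fin.tail a) ε ∩ {y | eval y r ≠ 0} ⊆
      Fin.tail '' ({x | eval x q = 0} \ {x | eval x P = 0}) := by
    rintro y ⟨hy, hry⟩
    obtain ⟨t, -, ht⟩ := intermediate_value_uIcc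
      ((continuous_eval q).comp (continuous_id.finCons continuous_const)).continuousOn
      (Set.mem_uIcc.2 (.inr ⟨(hball hy).2.le, (hball hy).1.le⟩))
    refine ⟨Fin.cons t y, ⟨ht, fun hP => hry ?_⟩, Fin.tail_cons _ _⟩
    rw [Function.comp_apply, eval_cons_eq_eval₂_finSuccEquiv] at ht
    rw [Set.mem_ofPred_eq, eval_cons_eq_eval₂_finSuccEquiv] at hP
    exact Polynomial.map_resultant_eq_zero_of_eval₂_eq_zero (eval y) hdeg ht hP
  have hopen : IsOpen (Metric.ball (Fin.tail a) ε ∩ {y | eval y r ≠ 0}) :=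
    Metric.isOpen_ball.inter (isOpen_ne_fun (continuous_eval r) continuous_const)
  have hempty : Metric.ball (Fin.tail a) ε ∩ {y | eval y r ≠ 0} = ∅ :=
    (hopen.measure_eq_zero_iff volume).1
      (measure_mono_null hsub (volume_image_finTail_eq_zero hnull))
  exact hr (eq_zero_of_forall_mem_ball_eval_eq_zero hε fun y hy =>
    not_not.1 fun h => hempty.subset ⟨hy, h⟩)

theorem dvd_of_sign_change {m : ℕ} {q P : MvPolynomial (Fin (m + 1)) ℝ} (hq : Irreducible q)
    (hnull : μH[(m : ℝ)] ({x | eval x q = 0} \ {x | eval x P = 0}) = 0) {a b : Fin (m + 1) → ℝ}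
    (ha : 0 < eval a q) (hb : eval b q < 0) : q ∣ P := by
  have hba : b - a ≠ 0 := sub_ne_zero.2 fun h => (h ▸ hb).not_gt ha
  obtain ⟨L, hL⟩ := LinearEquiv.exists_apply_eq_of_ne_zero (K := ℝ)
    (Pi.single_ne_zero_iff.2 one_ne_zero : Pi.single (0 : Fin (m + 1)) (1 : ℝ) ≠ 0) hba
  have hLb : L.symm b = L.symm a + Pi.single 0 1 := by
    rw [← L.symm_apply_eq.2 hL.symm, ← map_add, add_sub_cancel]
  set Φ := compLinearEquiv L
  suffices Φ q ∣ Φ P from (map_dvd_iff Φ).1 this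
  refine dvd_of_sign_change_on_line ((MulEquiv.irreducible_iff Φ).2 hq) ?_ (a := L.symm a)
    (b := L.symm b) ?_ (by simpa [Φ]) (by simpa [Φ])
  · have : {x | eval x (Φ q) = 0} \ {x | eval x (Φ P) = 0} =
        L ⁻¹' ({x | eval x q = 0} \ {x | eval x P = 0}) := by
      ext; simp [Φ]
    rw [this]
    exact L.hausdorffMeasure_preimage_eq_zero (Nat.cast_nonneg m) hnull
  · ext i
    simp [hLb, Fin.tail, Fin.succ_ne_zero]

/-- If `P, Q` are real polynomials such that `H^{n-1}(Z(Q) ∖ Z(P)) = 0` and every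
non-constant divisor of `Q` changes sign on `ℝⁿ`, then `Q` divides `P`. -/
theorem stmt18 {n : ℕ} (P Q : MvPolynomial (Fin n) ℝ)
    (hH : μH[(n : ℝ) - 1] ({x : Fin n → ℝ | eval x Q = 0} \ {x | eval x P = 0}) = 0)
    (hsign : ∀ Q₁ Q₂ : MvPolynomial (Fin n) ℝ, Q = Q₁ * Q₂ → Q₁.totalDegree ≠ 0 →
      (∃ x : Fin n → ℝ, 0 < eval x Q₁) ∧ (∃ y : Fin n → ℝ, eval y Q₁ < 0)) :
    ∃ R : MvPolynomial (Fin n) ℝ, P = Q * R := by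
  cases n with
  | zero =>
    refine dvd_of_isEmpty fun x hQ => not_not.1 fun hP => ?_
    exact (Set.eq_empty_of_hausdorffMeasure_eq_zero_of_nonpos (by norm_num) hH).subset ⟨hQ, hP⟩
  | succ m =>
    rw [Nat.cast_succ, add_sub_cancel_right] at hH
    have hQ : Squarefree Q :=
      squarefree_of_forall_dvd_exists_eval_neg fun Q₁ Q₂ h hdeg => (hsign Q₁ Q₂ h hdeg).2
    refine hQ.dvd_of_forall_prime_dvd fun p hp ⟨Q₂, hpQ⟩ => ?_
    obtain ⟨⟨a, ha⟩, b, hb⟩ :=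
      hsign p Q₂ hpQ (totalDegree_ne_zero_of_not_isUnit hp.ne_zero hp.not_isUnit)
    refine dvd_of_sign_change hp.irreducible (measure_mono_null ?_ hH) ha hb
    exact fun x ⟨hpx, hPx⟩ => ⟨by simp [hpQ, hpx.out], hPx⟩
end
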